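/- arXiv:2503.19499 — 4 statements merged into one kernel-verified Lean document; each statement's English description precedes it below -/
import Mathlib

section
/- Let 0 ≤ a < b ≤ 1, r ∈ [0,1), and N ≥ 1 a natural number. The number of indices k ∈ {0,...,N-1} such that (r + k/N) mod 1 ∈ [a, b) equals ⌈(b - r)·N⌉ - ⌈(a - r)·N⌉. -/
/-!
The predicate `Int.fract (r + k / N) ∈ [a, b)` is `N`-periodic in the integer `k`, so counting it
over `0 ≤ k < N` is the same as counting it over any `N` consecutive integers. On the window
`⌈-r N⌉ ≤ k < ⌈-r N⌉ + N` one has `r + k / N ∈ [0, 1)`, so the fractional part is `r + k / N`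
itself, and since `[a, b) ⊆ [0, 1)` the `k` that are counted form exactly the integer interval
`[⌈(a - r) N⌉, ⌈(b - r) N⌉)`.
-/

open Finset Function

theorem Function.Periodic.card_filter_range_eq_card_filter_Ico {p : ℤ → Prop} [DecidablePred p]
    {N : ℕ} (hp : Periodic p N) (m : ℤ) :
    #((range N).filter fun k : ℕ ↦ p k) = #{k ∈ Ico m (m + N) | p k} := by
  rcases N.eq_zero_or_pos with rfl | hN
  · simp
  have hmod : ∀ k : ℤ, 0 ≤ k % N ∧ k % N < N := fun k ↦
    ⟨Int.emod_nonneg k (by omega), Int.emod_lt_of_pos k (by omega)⟩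
  have hp_mod : ∀ k : ℤ, p (k % N) ↔ p k := fun k ↦ by
    rw [← hp.zsmul (k / N) (k % N), smul_eq_mul, mul_comm, Int.emod_add_mul_ediv]
  refine card_bij' (fun k _ ↦ m + ((k : ℤ) - m) % N) (fun k _ ↦ (k % N).toNat) ?_ ?_ ?_ ?_
  · intro k hk
    simp only [mem_filter, mem_range, mem_Ico] at hk ⊢
    have := hmod (k - m)
    refine ⟨⟨by omega, by omega⟩, ?_⟩
    rw [← hp_mod, Int.add_emod, Int.emod_emod, ← Int.add_emod, add_sub_cancel, hp_mod]
    exact hk.2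
  · intro k hk
    simp only [mem_filter, mem_range, mem_Ico] at hk ⊢
    have := hmod k
    rw [Int.toNat_of_nonneg this.1, hp_mod]
    exact ⟨by omega, hk.2⟩
  · intro k hk
    simp only [mem_filter, mem_range] at hk
    rw [Int.add_emod, Int.emod_emod, ← Int.add_emod, add_sub_cancel,
      Int.emod_eq_of_lt (by omega) (by omega)]
    simp
  · intro k hk
    simp only [mem_filter, mem_Ico] at hk
    rw [Int.toNat_of_nonneg (hmod k).1, Int.sub_emod, Int.emod_emod, ← Int.sub_emod,
      Int.emod_eq_of_lt (by omega) (by omega)]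
    omega

theorem add_div_mem_Ico_iff {N : ℝ} (hN : 0 < N) (r a b : ℝ) (k : ℤ) :
    r + k / N ∈ Set.Ico a b ↔ k ∈ Ico ⌈(a - r) * N⌉ ⌈(b - r) * N⌉ := by
  simp only [Set.mem_Ico, mem_Ico, Int.ceil_le, Int.lt_ceil, ← le_div_iff₀ hN, ← div_lt_iff₀ hN,
    ← sub_le_iff_le_add', lt_sub_iff_add_lt']

theorem periodic_fract_add_intCast_div (r : ℝ) {N : ℕ} (hN : N ≠ 0) :
    Periodic (fun k : ℤ ↦ Int.fract (r + k / N)) N := fun k ↦ by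
  have : (N : ℝ) ≠ 0 := Nat.cast_ne_zero.mpr hN
  simp [add_div, div_self this, ← add_assoc]

theorem stmt3_general (a b r : ℝ) (h0 : 0 ≤ a) (hab : a < b) (hb : b ≤ 1)
    (N : ℕ) (hN : 1 ≤ N) :
    (((Finset.range N).filter
        (fun k : ℕ => Int.fract (r + (k : ℝ) / N) ∈ Set.Ico a b)).card : ℤ)
      = ⌈(b - r) * N⌉ - ⌈(a - r) * N⌉ := by
  have hN' : (0 : ℝ) < N := by exact_mod_cast hN
  set s := ⌈(0 - r) * N⌉
  have hwindow : ∀ k : ℤ, k ∈ Ico s (s + N) ↔ r + k / N ∈ Set.Ico 0 1 := fun k ↦ by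
    rw [add_div_mem_Ico_iff hN', show (1 - r) * N = (0 - r) * N + N by ring,
      Int.ceil_add_natCast]
  have hfilter : (Ico s (s + N)).filter (fun k : ℤ ↦ Int.fract (r + k / N) ∈ Set.Ico a b) =
      Ico ⌈(a - r) * N⌉ ⌈(b - r) * N⌉ := by
    ext k
    rw [mem_filter, hwindow, ← add_div_mem_Ico_iff hN']
    constructor
    · rintro ⟨hk, hfract⟩
      rwa [Int.fract_eq_self.mpr hk] at hfract
    · intro hk
      have hk01 : r + k / N ∈ Set.Ico 0 1 := Set.Ico_subset_Ico h0 hb hk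
      exact ⟨hk01, by rwa [Int.fract_eq_self.mpr hk01]⟩
  have hshift := ((periodic_fract_add_intCast_div r (Nat.one_le_iff_ne_zero.mp hN)).comp
    (· ∈ Set.Ico a b)).card_filter_range_eq_card_filter_Ico s
  simp only [comp_apply, Int.cast_natCast] at hshift
  rw [hshift, hfilter, Int.card_Ico, Int.toNat_of_nonneg]
  exact sub_nonneg.mpr (Int.ceil_mono (by gcongr))

/-- The number of indices k ∈ {0,...,N-1} such that (r + k/N) mod 1 ∈ [a,b)
equals ⌈(b-r)·N⌉ - ⌈(a-r)·N⌉. -/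
theorem stmt3 (a b r : ℝ) (h0 : 0 ≤ a) (hab : a < b) (hb : b ≤ 1)
    (hr : r ∈ Set.Ico (0:ℝ) 1) (N : ℕ) (hN : 1 ≤ N) :
    (((Finset.range N).filter
        (fun k : ℕ => Int.fract (r + (k : ℝ) / N) ∈ Set.Ico a b)).card : ℤ)
      = ⌈(b - r) * N⌉ - ⌈(a - r) * N⌉ :=
  stmt3_general a b r h0 hab hb N hN
end

section
/- Let N ≥ 1, r ∈ [0,1), and [a,b) ⊆ [0,1) with the set K = {k ∈ {0,...,N-1} : (r + k/N) mod 1 ∈ [a,b)} nonempty. Writing t₀ = ⌈(a - r)·N⌉, the elements of K are exactly the residues (t₀ + j) mod N for j = 0, 1, ..., |K| - 1; i.e., K forms a set of consecutive residues modulo N. -/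
/-- Membership in the surviving set rephrased as an integer two-sided inequality. -/
lemma stmt8_mem_iff (a b r : ℝ) (N : ℕ) (hN : 1 ≤ N) (h0 : 0 ≤ a) (hb : b ≤ 1)
    (k : ℕ) :
    Int.fract (r + (k : ℝ) / N) ∈ Set.Ico a b ↔
      ∃ m : ℤ, ⌈(a - r) * N⌉ ≤ (k : ℤ) - m * N ∧ (k : ℤ) - m * N < ⌈(b - r) * N⌉ := by
  have hN0 : (0:ℝ) < N := by exact_mod_cast hN
  set x : ℝ := r + (k : ℝ) / N with hx
  have hdm : (k : ℝ) / N * N = k := div_mul_cancel₀ _ hN0.ne'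
  have key : ∀ m : ℤ, (a ≤ x - m ∧ x - m < b) ↔
      ((a - r) * N ≤ (k : ℝ) - m * N ∧ (k : ℝ) - m * N < (b - r) * N) := by
    intro m
    have e : ((k:ℝ) - m * N) / N = (k:ℝ)/N - m := by field_simp
    constructor
    · rintro ⟨h1, h2⟩
      constructor
      · have h := mul_le_mul_of_nonneg_right h1 hN0.le
        simp only [hx] at h
        nlinarith [hdm]
      · have h := mul_lt_mul_of_pos_right h2 hN0
        simp only [hx] at h
        nlinarith [hdm]
    · rintro ⟨h1, h2⟩
      have h1' : a - r ≤ ((k:ℝ) - m * N) / N := (le_div_iff₀ hN0).mpr (by linarith)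
      have h2' : ((k:ℝ) - m * N) / N < b - r := (div_lt_iff₀ hN0).mpr (by linarith)
      rw [e] at h1' h2'
      constructor <;> simp only [hx] <;> linarith
  have key2 : ∀ m : ℤ, (a ≤ x - m ∧ x - m < b) ↔
      (⌈(a - r) * N⌉ ≤ (k : ℤ) - m * N ∧ (k : ℤ) - m * N < ⌈(b - r) * N⌉) := by
    intro m
    rw [key m]
    constructor
    · rintro ⟨h1, h2⟩
      exact ⟨Int.ceil_le.mpr (by push_cast; linarith),
             Int.lt_ceil.mpr (by push_cast; linarith)⟩
    · rintro ⟨h1, h2⟩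
      have h1' := Int.ceil_le.mp h1
      have h2' := Int.lt_ceil.mp h2
      push_cast at h1' h2'
      exact ⟨by linarith, by linarith⟩
  constructor
  · rintro ⟨h1, h2⟩
    refine ⟨⌊x⌋, (key2 ⌊x⌋).mp ?_⟩
    rw [Int.self_sub_floor]
    exact ⟨h1, h2⟩
  · rintro ⟨m, hm⟩
    obtain ⟨h1, h2⟩ := (key2 m).mpr hm
    have hfloor : ⌊x⌋ = m := by
      rw [Int.floor_eq_iff]
      constructor <;> push_cast <;> linarith
    have : Int.fract x = x - m := by rw [Int.fract, hfloor]
    rw [this]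
    exact ⟨h1, h2⟩

/-- The surviving indices K = {k < N : (r + k/N) mod 1 ∈ [a,b)}, when nonempty, are
exactly the consecutive residues (t₀ + j) mod N for j = 0,...,|K|-1, with t₀ = ⌈(a-r)N⌉. -/
theorem stmt8 (a b r : ℝ) (N : ℕ) (hN : 1 ≤ N) (h0 : 0 ≤ a) (hab : a < b) (hb : b ≤ 1)
    (hr : r ∈ Set.Ico (0:ℝ) 1) (K : Finset ℕ)
    (hK : K = (Finset.range N).filter
        (fun k : ℕ => Int.fract (r + (k : ℝ) / N) ∈ Set.Ico a b))
    (hne : K.Nonempty) :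
    K = Finset.image (fun j : ℕ => ((⌈(a - r) * N⌉ + j) % (N : ℤ)).toNat)
          (Finset.range K.card) := by
  have hN0 : (0:ℝ) < N := by exact_mod_cast hN
  have hNZ : (0:ℤ) < (N:ℤ) := by exact_mod_cast hN
  set t0 : ℤ := ⌈(a - r) * N⌉ with ht0
  set t1 : ℤ := ⌈(b - r) * N⌉ with ht1
  -- length bound : t1 ≤ t0 + N
  have hlen : t1 ≤ t0 + N := by
    have h1 : (b - r) * N ≤ (a - r) * N + N := by nlinarith
    calc t1 ≤ ⌈(a - r) * N + (N:ℤ)⌉ := by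
            apply Int.ceil_le_ceil; push_cast; linarith
      _ = t0 + N := by rw [Int.ceil_add_intCast]
  set L : ℕ := (t1 - t0).toNat with hL
  have hLN : L ≤ N := by omega
  -- main set equality with range L
  have hmain : K = Finset.image (fun j : ℕ => ((t0 + j) % (N : ℤ)).toNat) (Finset.range L) := by
    ext k
    rw [hK, Finset.mem_filter, Finset.mem_range, Finset.mem_image]
    constructor
    · rintro ⟨hk, hmem⟩
      obtain ⟨m, hm1, hm2⟩ := (stmt8_mem_iff a b r N hN h0 hb k).mp hmem
      refine ⟨(k - m * N - t0).toNat, ?_, ?_⟩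
      · rw [Finset.mem_range]; omega
      · have hj : ((k - m * N - t0).toNat : ℤ) = (k:ℤ) - m * N - t0 := by omega
        have e1 : t0 + (((k:ℤ) - m * N - t0).toNat : ℤ) = (k:ℤ) + (N:ℤ) * (-m) := by
          rw [hj]; ring
        simp only [e1, Int.add_mul_emod_self_left,
          Int.emod_eq_of_lt (by omega : (0:ℤ) ≤ (k:ℤ)) (by omega : (k:ℤ) < (N:ℤ))]
        omega
    · rintro ⟨j, hj, rfl⟩
      rw [Finset.mem_range] at hj
      have hjz : (j:ℤ) < t1 - t0 := by omega
      have hmod1 : 0 ≤ (t0 + (j:ℤ)) % N := Int.emod_nonneg _ (by omega)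
      have hmod2 : (t0 + (j:ℤ)) % N < N := Int.emod_lt_of_pos _ hNZ
      have hcast : ((((t0 + (j:ℤ)) % N).toNat : ℤ)) = (t0 + (j:ℤ)) % N := by omega
      have keyq : ((t0 + (j:ℤ)) % N) - (-((t0 + (j:ℤ)) / N)) * N = t0 + j := by
        rw [Int.emod_def]; ring
      refine ⟨by omega, ?_⟩
      rw [stmt8_mem_iff a b r N hN h0 hb]
      refine ⟨-((t0 + (j:ℤ)) / N), ?_, ?_⟩ <;> rw [hcast, keyq] <;> omega
  -- injectivity gives the card
  have hinj : Set.InjOn (fun j : ℕ => ((t0 + j) % (N : ℤ)).toNat) (Finset.range L) := by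
    intro i hi j hj hij
    simp only [Finset.coe_range, Set.mem_Iio] at hi hj
    simp only at hij
    have h1 : (t0 + (i:ℤ)) % N = (t0 + (j:ℤ)) % N := by
      have hm1 : 0 ≤ (t0 + (i:ℤ)) % N := Int.emod_nonneg _ (by omega)
      have hm2 : 0 ≤ (t0 + (j:ℤ)) % N := Int.emod_nonneg _ (by omega)
      omega
    have h2 : ((t0 + (i:ℤ)) - (t0 + (j:ℤ))) % N = 0 :=
      (Int.emod_eq_emod_iff_emod_sub_eq_zero).mp h1
    have h3 : (N:ℤ) ∣ ((i:ℤ) - (j:ℤ)) := by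
      have e : (t0 + (i:ℤ)) - (t0 + (j:ℤ)) = (i:ℤ) - j := by ring
      rw [e] at h2
      exact Int.dvd_of_emod_eq_zero h2
    have h4 : (i:ℤ) - j = 0 := Int.eq_zero_of_abs_lt_dvd h3 (by rw [abs_lt]; omega)
    omega
  have hcard : K.card = L := by
    rw [hmain, Finset.card_image_of_injOn hinj, Finset.card_range]
  rw [hcard]
  exact hmain
end

section
/- Let N ≥ 1, r ∈ [0,1), and k_m ∈ {0,...,N-1} with (r + k_m/N) mod 1 ∈ [a,b) ⊆ [0,1). With t₀ = ⌈(a - r)·N⌉, the new index k' defined by k' = k_m - N - t₀ if k_m + rN ≥ N and k' = k_m - t₀ otherwise, satisfies 0 ≤ k' < ⌈(b - r)·N⌉ - t₀ and (t₀ + k') ≡ k_m (mod N). -/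
/-- Correctness of the index update in SparSamp's sparse algorithm: the updated index k'
satisfies 0 ≤ k' < ⌈(b-r)N⌉ - t₀ and (t₀ + k') ≡ k_m (mod N). -/
theorem stmt9 (a b r : ℝ) (N : ℕ) (hN : 1 ≤ N) (h0 : 0 ≤ a) (hab : a < b) (hb : b ≤ 1)
    (hr : r ∈ Set.Ico (0:ℝ) 1) (km : ℕ) (hkm : km < N)
    (hmem : Int.fract (r + (km : ℝ) / N) ∈ Set.Ico a b) :
    let t₀ : ℤ := ⌈(a - r) * N⌉
    let k' : ℤ := if (km : ℝ) + r * N ≥ N then (km : ℤ) - N - t₀ else (km : ℤ) - t₀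
    0 ≤ k' ∧ k' < ⌈(b - r) * N⌉ - t₀ ∧ (t₀ + k') ≡ (km : ℤ) [ZMOD (N : ℤ)] := by
  intro t₀ k'
  have hNR : (0:ℝ) < N := by exact_mod_cast Nat.lt_of_lt_of_le Nat.zero_lt_one hN
  have hkmR : (km:ℝ) < N := by exact_mod_cast hkm
  have hr0 : 0 ≤ r := hr.1
  have hr1 : r < 1 := hr.2
  have hdiv : (km:ℝ)/N * N = km := div_mul_cancel₀ _ (ne_of_gt hNR)
  have hd0 : 0 ≤ (km:ℝ)/N := by positivity
  by_cases hc : (km : ℝ) + r * N ≥ N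
  · have h1 : 1 ≤ r + (km:ℝ)/N := by nlinarith
    have h2 : r + (km:ℝ)/N < 2 := by nlinarith
    have hfract : Int.fract (r + (km:ℝ)/N) = r + (km:ℝ)/N - 1 := by
      have hfl : ⌊r + (km:ℝ)/N⌋ = 1 := by
        rw [Int.floor_eq_iff]
        constructor <;> push_cast <;> linarith
      rw [Int.fract, hfl]; norm_num
    rw [hfract] at hmem
    obtain ⟨ha, hb'⟩ := hmem
    have hk' : k' = (km : ℤ) - N - t₀ := if_pos hc
    refine ⟨?_, ?_, ?_⟩
    · rw [hk']
      have : t₀ ≤ (km : ℤ) - N := by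
        rw [Int.ceil_le]; push_cast; nlinarith
      linarith
    · rw [hk']
      have : (km : ℤ) - N < ⌈(b - r) * N⌉ := by
        rw [Int.lt_ceil]; push_cast; nlinarith
      linarith
    · rw [hk']
      have he : t₀ + ((km:ℤ) - N - t₀) = (km:ℤ) - N := by ring
      rw [he]
      exact Int.emod_eq_sub_self_emod.symm
  · push_neg at hc
    have h1 : 0 ≤ r + (km:ℝ)/N := by positivity
    have h2 : r + (km:ℝ)/N < 1 := by nlinarith
    have hfract : Int.fract (r + (km:ℝ)/N) = r + (km:ℝ)/N :=
      Int.fract_eq_self.mpr ⟨h1, h2⟩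
    rw [hfract] at hmem
    obtain ⟨ha, hb'⟩ := hmem
    have hk' : k' = (km : ℤ) - t₀ := if_neg (not_le.mpr hc)
    refine ⟨?_, ?_, ?_⟩
    · rw [hk']
      have : t₀ ≤ (km : ℤ) := by
        rw [Int.ceil_le]; push_cast; nlinarith
      linarith
    · rw [hk']
      have : (km : ℤ) < ⌈(b - r) * N⌉ := by
        rw [Int.lt_ceil]; push_cast; nlinarith
      linarith
    · rw [hk']
      have he : t₀ + ((km:ℤ) - t₀) = (km:ℤ) := by ring
      rw [he]
end

section
/- Decoding inverts encoding for one SparSamp step: let N ≥ 1, k ∈ {0,...,N-1}, r ∈ [0,1), and let [a,b) be the token interval containing (r + k/N) mod 1. Then with t₀ = ⌈(a-r)N⌉, t₁ = ⌈(b-r)N⌉, the decoder's reconstruction k ≡ t₀ + k' (mod N) with k' = k - t₀ (mod N) satisfies 0 ≤ k' < t₁ - t₀ and uniquely recovers k given (t₀, t₁, k'). -/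
/-- Decoding inverts encoding for one SparSamp step: k' = (k - t₀) mod N lies in
[0, t₁ - t₀), and k ↦ (k - t₀) mod N is a bijection from the surviving index set onto
{0,...,t₁ - t₀ - 1}, so k is uniquely recovered from (t₀, t₁, k'). -/
theorem stmt17 (a b r : ℝ) (N : ℕ) (hN : 1 ≤ N) (h0 : 0 ≤ a) (hab : a < b) (hb : b ≤ 1)
    (hr : r ∈ Set.Ico (0:ℝ) 1) (k : ℕ) (hk : k < N)
    (hmem : Int.fract (r + (k : ℝ) / N) ∈ Set.Ico a b) :
    let t₀ : ℤ := ⌈(a - r) * N⌉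
    let t₁ : ℤ := ⌈(b - r) * N⌉
    let k' : ℤ := ((k : ℤ) - t₀) % N
    (0 ≤ k' ∧ k' < t₁ - t₀) ∧
    Set.BijOn (fun m : ℕ => ((m : ℤ) - t₀) % N)
      {m : ℕ | m < N ∧ Int.fract (r + (m : ℝ) / N) ∈ Set.Ico a b}
      (Set.Ico 0 (t₁ - t₀)) := by
  intro t₀ t₁ k'
  obtain ⟨hr0, hr1⟩ := hr
  have hN1 : (1:ℝ) ≤ (N:ℝ) := by exact_mod_cast hN
  have hNR : (0:ℝ) < (N:ℝ) := by linarith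
  -- basic bounds on t₀, t₁
  have ht₀lb : -(N:ℤ) < t₀ := by
    rw [Int.lt_ceil]; push_cast; nlinarith
  have ht₁ub : t₁ ≤ (N:ℤ) := by
    rw [Int.ceil_le]; push_cast; nlinarith
  have ht₀r : (a - r) * N ≤ (t₀ : ℝ) := Int.le_ceil _
  have hdiff : t₁ - t₀ ≤ (N:ℤ) := by
    have : t₁ ≤ t₀ + N := by
      rw [Int.ceil_le]; push_cast; nlinarith
    omega
  -- characterization of survival
  have key : ∀ m : ℕ, m < N →
      (Int.fract (r + (m:ℝ)/N) ∈ Set.Ico a b ↔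
        (t₀ ≤ (m:ℤ) - ⌊r + (m:ℝ)/N⌋ * N ∧ (m:ℤ) - ⌊r + (m:ℝ)/N⌋ * N < t₁)) := by
    intro m hm
    set e : ℤ := ⌊r + (m:ℝ)/N⌋ with he
    have hf : Int.fract (r + (m:ℝ)/N) = r + (m:ℝ)/N - e := rfl
    rw [Set.mem_Ico, hf]
    have hdivcast : (((m:ℤ) - e * N : ℤ) : ℝ) / N = (m:ℝ)/N - e := by
      push_cast
      field_simp
    constructor
    · rintro ⟨h1, h2⟩
      constructor
      · rw [Int.ceil_le]
        have : a - r ≤ (((m:ℤ) - e * N : ℤ) : ℝ) / N := by rw [hdivcast]; linarith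
        have := (le_div_iff₀ hNR).mp this
        push_cast at this ⊢
        linarith
      · rw [Int.lt_ceil]
        have : (((m:ℤ) - e * N : ℤ) : ℝ) / N < b - r := by rw [hdivcast]; linarith
        have := (div_lt_iff₀ hNR).mp this
        push_cast at this ⊢
        linarith
    · rintro ⟨h1, h2⟩
      rw [Int.ceil_le] at h1
      rw [Int.lt_ceil] at h2
      have h1' : a - r ≤ (((m:ℤ) - e * N : ℤ) : ℝ) / N := (le_div_iff₀ hNR).mpr (by push_cast at h1 ⊢; linarith)
      have h2' : (((m:ℤ) - e * N : ℤ) : ℝ) / N < b - r := (div_lt_iff₀ hNR).mpr (by push_cast at h2 ⊢; linarith)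
      rw [hdivcast] at h1' h2'
      constructor <;> linarith
  -- MapsTo
  have hmaps : Set.MapsTo (fun m : ℕ => ((m : ℤ) - t₀) % N)
      {m : ℕ | m < N ∧ Int.fract (r + (m : ℝ) / N) ∈ Set.Ico a b}
      (Set.Ico 0 (t₁ - t₀)) := by
    rintro m ⟨hmN, hms⟩
    obtain ⟨hj1, hj2⟩ := (key m hmN).mp hms
    set e : ℤ := ⌊r + (m:ℝ)/N⌋ with he
    have hmod : ((m:ℤ) - t₀) % N = (m:ℤ) - e * N - t₀ := by
      have hrw : (m:ℤ) - t₀ = ((m:ℤ) - e * N - t₀) + (N:ℤ) * e := by ring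
      rw [hrw, Int.add_mul_emod_self_left, Int.emod_eq_of_lt (by omega) (by omega)]
    simp only [Set.mem_Ico]
    rw [hmod]
    omega
  -- InjOn
  have hinj : Set.InjOn (fun m : ℕ => ((m : ℤ) - t₀) % N)
      {m : ℕ | m < N ∧ Int.fract (r + (m : ℝ) / N) ∈ Set.Ico a b} := by
    rintro m₁ ⟨h₁N, _⟩ m₂ ⟨h₂N, _⟩ heq
    simp only at heq
    have hmeq : ((m₁:ℤ) - t₀) ≡ ((m₂:ℤ) - t₀) [ZMOD (N:ℤ)] := heq
    have hd : (N:ℤ) ∣ ((m₂:ℤ) - t₀) - ((m₁:ℤ) - t₀) := Int.ModEq.dvd hmeq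
    have hd' : (N:ℤ) ∣ (m₂:ℤ) - (m₁:ℤ) := by
      have : ((m₂:ℤ) - t₀) - ((m₁:ℤ) - t₀) = (m₂:ℤ) - (m₁:ℤ) := by ring
      rwa [this] at hd
    have : (m₂:ℤ) - (m₁:ℤ) = 0 := by
      refine Int.eq_zero_of_abs_lt_dvd hd' ?_
      rw [abs_lt]
      omega
    omega
  -- SurjOn
  have hsurj : Set.SurjOn (fun m : ℕ => ((m : ℤ) - t₀) % N)
      {m : ℕ | m < N ∧ Int.fract (r + (m : ℝ) / N) ∈ Set.Ico a b}
      (Set.Ico 0 (t₁ - t₀)) := by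
    rintro v ⟨hv0, hv1⟩
    by_cases hc : 0 ≤ t₀ + v
    · have hmN : (t₀ + v).toNat < N := by omega
      have hz : (((t₀ + v).toNat : ℕ) : ℤ) = t₀ + v := Int.toNat_of_nonneg hc
      have hzr : (((t₀ + v).toNat : ℕ) : ℝ) = ((t₀ + v : ℤ) : ℝ) := by exact_mod_cast congrArg (Int.cast : ℤ → ℝ) hz
      refine ⟨(t₀ + v).toNat, ⟨hmN, ?_⟩, ?_⟩
      · rw [key _ hmN]
        have hflo : ⌊r + (((t₀ + v).toNat : ℕ) : ℝ)/N⌋ = 0 := by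
          rw [Int.floor_eq_zero_iff, Set.mem_Ico]
          constructor
          · have : (0:ℝ) ≤ (((t₀ + v).toNat : ℕ) : ℝ)/N := by positivity
            linarith
          · have hlt : (((t₀ + v : ℤ)) : ℝ) < (b - r) * N := by
              rw [← Int.lt_ceil]; omega
            have : (((t₀ + v).toNat : ℕ) : ℝ)/N < b - r := by
              rw [div_lt_iff₀ hNR, hzr]; linarith
            linarith
        rw [hflo]
        omega
      · simp only
        rw [hz]
        have hvv : t₀ + v - t₀ = v := by ring
        rw [hvv, Int.emod_eq_of_lt hv0 (by omega)]
    · have hmN : (t₀ + v + N).toNat < N := by omega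
      have hz : (((t₀ + v + N).toNat : ℕ) : ℤ) = t₀ + v + N := Int.toNat_of_nonneg (by omega)
      have hzr : (((t₀ + v + N).toNat : ℕ) : ℝ) = ((t₀ + v + N : ℤ) : ℝ) := by
        exact_mod_cast congrArg (Int.cast : ℤ → ℝ) hz
      refine ⟨(t₀ + v + N).toNat, ⟨hmN, ?_⟩, ?_⟩
      · rw [key _ hmN]
        have hflo : ⌊r + (((t₀ + v + N).toNat : ℕ) : ℝ)/N⌋ = 1 := by
          rw [Int.floor_eq_iff]
          constructor
          · -- 1 ≤ r + m/N
            have hge : -r * N ≤ ((t₀ + v : ℤ) : ℝ) := by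
              have hv0r : (0:ℝ) ≤ ((v:ℤ):ℝ) := by exact_mod_cast hv0
              push_cast
              nlinarith
            have : (1 - r) * N ≤ ((t₀ + v + N : ℤ) : ℝ) := by push_cast at hge ⊢; linarith
            have := (le_div_iff₀ hNR).mpr (by linarith [this] : (1 - r) * N ≤ ((t₀ + v + N : ℤ) : ℝ))
            rw [← hzr] at this
            push_cast
            linarith [(le_div_iff₀ hNR).mpr (hzr ▸ ‹(1 - r) * N ≤ ((t₀ + v + N : ℤ) : ℝ)›)]
          · -- r + m/N < 2
            have hlt : ((t₀ + v + N : ℤ) : ℝ) < (2 - r) * N := by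
              have : ((t₀ + v : ℤ) : ℝ) < 0 := by
                have : t₀ + v < 0 := by omega
                exact_mod_cast this
              push_cast at this ⊢
              nlinarith
            have : (((t₀ + v + N).toNat : ℕ) : ℝ)/N < 2 - r := by
              rw [div_lt_iff₀ hNR, hzr]; linarith
            push_cast
            linarith
        rw [hflo]
        omega
      · simp only
        rw [hz]
        have hvv : t₀ + v + (N:ℤ) - t₀ = v + (N:ℤ) * 1 := by ring
        rw [hvv, Int.add_mul_emod_self_left, Int.emod_eq_of_lt hv0 (by omega)]
  refine ⟨?_, hmaps, hinj, hsurj⟩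
  have := hmaps ⟨hk, hmem⟩
  simpa [Set.mem_Ico] using this
end
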